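/- Let A₁ be a subalgebra of M_N(Aₙ) (N×N matrices over the n-th Weyl algebra) containing k[p₁,…,pₙ]·A₁ and acting irreducibly on M = k[T₁,…,Tₙ] ⊗ k^N via the standard representation. Then the centralizer D = End_{A₁}(M), a division ring by Schur's lemma, consists of H-linear endomorphisms of M and equals k. -/
import Mathlib


open MvPolynomial

variable (k : Type*) [Field k] (n N : ℕ)

/-- `M = H ⊗ k^N = H^N`, the natural module of `N`-columns over `H = k[T₁,…,Tₙ]`. -/
abbrev Mmod (k : Type*) [Field k] (n N : ℕ) := Fin N → MvPolynomial (Fin n) k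

/-- The action of `pᵢ` (multiplication by `Tᵢ` in each component). -/
noncomputable def Pmul (i : Fin n) : Module.End k (Mmod k n N) :=
  LinearMap.pi fun s => (LinearMap.mulLeft k (X i)) ∘ₗ LinearMap.proj s

/-- The action of `qᵢ` (the partial derivative `∂/∂Tᵢ` in each component). -/
noncomputable def Qder (i : Fin n) : Module.End k (Mmod k n N) :=
  LinearMap.pi fun s => (pderiv i).toLinearMap ∘ₗ LinearMap.proj s

/-- The action of a scalar matrix `u ∈ M_N(k)`. -/
noncomputable def matOp (u : Matrix (Fin N) (Fin N) k) : Module.End k (Mmod k n N) :=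
  LinearMap.pi fun s => ∑ t, u s t • LinearMap.proj t

/-- `M_N(Aₙ)`, realised as the subalgebra of `End_k(M)` generated by the `pᵢ`, the
`qᵢ` and the scalar matrices. -/
noncomputable def weylMatAlg : Subalgebra k (Module.End k (Mmod k n N)) :=
  Algebra.adjoin k
    (Set.range (Pmul k n N) ∪ Set.range (Qder k n N) ∪ Set.range (matOp k n N))

noncomputable def mulOp (f : MvPolynomial (Fin n) k) : Module.End k (Mmod k n N) :=
  LinearMap.pi fun s => (LinearMap.mulLeft k f) ∘ₗ LinearMap.proj s

lemma mulOp_apply (f : MvPolynomial (Fin n) k) (m : Mmod k n N) (s : Fin N) :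
    mulOp k n N f m s = f * m s := rfl

lemma mulOp_comm {ψ : Module.End k (Mmod k n N)}
    (h : ∀ i, ψ * Pmul k n N i = Pmul k n N i * ψ) (f : MvPolynomial (Fin n) k) :
    ψ * mulOp k n N f = mulOp k n N f * ψ := by
  induction f using MvPolynomial.induction_on with
  | C a =>
      have : mulOp k n N (C a) = a • 1 := by
        ext m s
        simp [mulOp_apply, smul_eq_C_mul]
      rw [this, mul_smul_comm, smul_mul_assoc, one_mul, mul_one]
  | add p q hp hq =>
      have : mulOp k n N (p + q) = mulOp k n N p + mulOp k n N q := by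
        ext m s; simp [mulOp_apply, add_mul]
      rw [this, mul_add, add_mul, hp, hq]
  | mul_X p i hp =>
      have : mulOp k n N (p * X i) = mulOp k n N p * Pmul k n N i := by
        ext m s
        simp [mulOp_apply, Pmul, Module.End.mul_apply, mul_assoc]
      rw [this, ← mul_assoc, hp, mul_assoc, h i, ← mul_assoc]

noncomputable def endMat (ψ : Module.End k (Mmod k n N)) :
    Matrix (Fin N) (Fin N) (MvPolynomial (Fin n) k) :=
  Matrix.of fun s t => ψ (Pi.single t 1) s

lemma endMat_apply {ψ : Module.End k (Mmod k n N)}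
    (h : ∀ i, ψ * Pmul k n N i = Pmul k n N i * ψ) (m : Mmod k n N) (s : Fin N) :
    ψ m s = ∑ t, endMat k n N ψ s t * m t := by
  have hm : m = ∑ t, mulOp k n N (m t) (Pi.single t 1) := by
    have h1 : ∀ t, mulOp k n N (m t) (Pi.single t 1) = Pi.single t (m t) := by
      intro t; funext u
      rw [mulOp_apply, Pi.single_apply, Pi.single_apply]
      split <;> simp
    simp_rw [h1]
    exact (Finset.univ_sum_single m).symm
  conv_lhs => rw [hm]
  rw [map_sum, Finset.sum_apply]
  refine Finset.sum_congr rfl fun t _ => ?_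
  have := congrArg (fun (g : Module.End k (Mmod k n N)) => g (Pi.single t 1) s)
    (mulOp_comm k n N h (m t))
  simp only [Module.End.mul_apply] at this
  rw [this, mulOp_apply, endMat, Matrix.of_apply, mul_comm]

lemma endMat_mul {ψ1 ψ2 : Module.End k (Mmod k n N)}
    (h1 : ∀ i, ψ1 * Pmul k n N i = Pmul k n N i * ψ1)
    (h2 : ∀ i, ψ2 * Pmul k n N i = Pmul k n N i * ψ2) :
    endMat k n N (ψ1 * ψ2) = endMat k n N ψ1 * endMat k n N ψ2 := by
  ext s t
  rw [Matrix.mul_apply, endMat, Matrix.of_apply, Module.End.mul_apply,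
    endMat_apply k n N h1]
  rfl

lemma endMat_one : endMat k n N 1 = 1 := by
  ext s t
  rw [endMat, Matrix.of_apply, Matrix.one_apply, Module.End.one_apply, Pi.single_apply]

lemma schur (A1 : Subalgebra k (Module.End k (Mmod k n N)))
    (hirr : ∀ U : Submodule k (Mmod k n N),
      (∀ x ∈ A1, ∀ u ∈ U, x u ∈ U) → U = ⊥ ∨ U = ⊤)
    (ψ : Module.End k (Mmod k n N)) (hψ : ∀ x ∈ A1, ψ * x = x * ψ) :
    ψ = 0 ∨ Function.Bijective ψ := by
  have hcomm : ∀ x ∈ A1, ∀ u, ψ (x u) = x (ψ u) := by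
    intro x hx u
    exact congrArg (fun g : Module.End k (Mmod k n N) => g u) (hψ x hx)
  rcases hirr (LinearMap.ker ψ) (by
      intro x hx u hu
      rw [LinearMap.mem_ker] at hu ⊢
      rw [hcomm x hx, hu, map_zero]) with hk | hk
  · rcases hirr (LinearMap.range ψ) (by
        intro x hx u hu
        obtain ⟨v, rfl⟩ := hu
        exact ⟨x v, hcomm x hx v⟩) with hr | hr
    · left
      apply LinearMap.ext; intro u
      have : ψ u ∈ LinearMap.range ψ := ⟨u, rfl⟩
      rw [hr] at this
      simpa using this
    · right
      exact ⟨LinearMap.ker_eq_bot.mp hk, LinearMap.range_eq_top.mp hr⟩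
  · left
    apply LinearMap.ext; intro u
    have : u ∈ LinearMap.ker ψ := by rw [hk]; trivial
    simpa using this

/-- main -/
theorem centralizer_eq_scalars [IsAlgClosed k] [CharZero k]
    (A1 : Subalgebra k (Module.End k (Mmod k n N)))
    (hA1 : A1 ≤ weylMatAlg k n N)
    (hp : ∀ (i : Fin n), ∀ x ∈ A1, Pmul k n N i * x ∈ A1)
    (hirr : ∀ U : Submodule k (Mmod k n N),
      (∀ x ∈ A1, ∀ u ∈ U, x u ∈ U) → U = ⊥ ∨ U = ⊤) :
    ∀ φ : Module.End k (Mmod k n N), (∀ x ∈ A1, φ * x = x * φ) →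
      (∀ i : Fin n, φ * Pmul k n N i = Pmul k n N i * φ) ∧
      ∃ c : k, φ = c • (1 : Module.End k (Mmod k n N)) := by
  intro φ hφ
  have hPmem : ∀ i, Pmul k n N i ∈ A1 := by
    intro i
    have := hp i 1 (one_mem A1)
    simpa using this
  have hcommP : ∀ i, φ * Pmul k n N i = Pmul k n N i * φ := fun i => hφ _ (hPmem i)
  refine ⟨hcommP, ?_⟩
  rcases Nat.eq_zero_or_pos N with hN | hN
  · refine ⟨0, LinearMap.ext fun m => funext fun s => ?_⟩
    exact absurd s.2 (by omega)
  haveI : NeZero N := ⟨hN.ne'⟩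
  set B0 : Matrix (Fin N) (Fin N) k :=
    (endMat k n N φ).map constantCoeff with hB0def
  obtain ⟨c, hc⟩ := Module.End.exists_eigenvalue (Matrix.mulVecLin B0)
  obtain ⟨v, hv⟩ := hc.exists_hasEigenvector
  refine ⟨c, ?_⟩
  set ψ := φ - c • (1 : Module.End k (Mmod k n N)) with hψdef
  have hψA : ∀ x ∈ A1, ψ * x = x * ψ := by
    intro x hx
    rw [hψdef, sub_mul, mul_sub, hφ x hx, smul_mul_assoc, mul_smul_comm, one_mul, mul_one]
  have hψP : ∀ i, ψ * Pmul k n N i = Pmul k n N i * ψ := fun i => hψA _ (hPmem i)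
  rcases schur k n N A1 hirr ψ hψA with h0 | hbij
  · exact sub_eq_zero.mp h0
  exfalso
  -- inverse of ψ
  let e := LinearEquiv.ofBijective ψ hbij
  let χ : Module.End k (Mmod k n N) := e.symm.toLinearMap
  have hψχ : ψ * χ = 1 := LinearMap.ext fun m => e.apply_symm_apply m
  have hχψ : χ * ψ = 1 := LinearMap.ext fun m => e.symm_apply_apply m
  have hχP : ∀ i, χ * Pmul k n N i = Pmul k n N i * χ := by
    intro i
    calc χ * Pmul k n N i = χ * Pmul k n N i * (ψ * χ) := by rw [hψχ, mul_one]
      _ = χ * (Pmul k n N i * ψ) * χ := by simp [mul_assoc]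
      _ = χ * (ψ * Pmul k n N i) * χ := by rw [hψP i]
      _ = (χ * ψ) * (Pmul k n N i * χ) := by simp [mul_assoc]
      _ = Pmul k n N i * χ := by rw [hχψ, one_mul]
  have hm2 : endMat k n N χ * endMat k n N ψ = 1 := by
    rw [← endMat_mul k n N hχP hψP, hχψ, endMat_one]
  have hmk2 : ((endMat k n N χ).map constantCoeff) * ((endMat k n N ψ).map constantCoeff)
      = 1 := by
    rw [← Matrix.map_mul, hm2, Matrix.map_one _ (map_zero _) (map_one _)]
  have hBψ : (endMat k n N ψ).map constantCoeff = B0 - c • 1 := by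
    ext s t
    simp only [hB0def, Matrix.map_apply, Matrix.sub_apply, Matrix.smul_apply,
      Matrix.one_apply, endMat, Matrix.of_apply, hψdef, LinearMap.sub_apply,
      LinearMap.smul_apply, Module.End.one_apply, Pi.sub_apply, Pi.smul_apply,
      map_sub, Pi.single_apply, smul_eq_mul]
    split <;> simp [Algebra.smul_def]
  have hBv : B0.mulVec v = c • v := by
    have := Module.End.mem_eigenspace_iff.mp hv.1
    rwa [Matrix.mulVecLin_apply] at this
  have hv0 : ((endMat k n N ψ).map constantCoeff).mulVec v = 0 := by
    rw [hBψ, Matrix.sub_mulVec, hBv, Matrix.smul_mulVec, Matrix.one_mulVec, sub_self]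
  have hvz : v = 0 := by
    have h1 := congrArg (fun w => ((endMat k n N χ).map constantCoeff).mulVec w) hv0
    simp only [Matrix.mulVec_mulVec, hmk2, Matrix.one_mulVec, Matrix.mulVec_zero] at h1
    exact h1
  exact hv.2 hvz
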